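/- In the restricted class-segregated buffer model with one queue per value v_1 < ... < v_m, all of capacity B, for every input sequence σ, every feasible diligent schedule OPT, and every index 1 ≤ i ≤ m-1, it holds that ∑_{j=i}^{m-1} (A*_j − A_j) ≤ ∑_{j=i+1}^{m} A_j, where A_j and A*_j are the numbers of v_j-packets accepted by GREEDY and by OPT, respectively. -/
import Mathlib


/-!
Model of class-segregated buffer management (Al-Bawani, Souza).

A switch has `n` queues and `m` packet values `val : Fin m → ℝ`; queue `q` is
assigned value index `qval q` and has capacity `cap q`.  An input sequence is a
list of events: an `arrive q` event (a packet destined to queue `q`) or a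
`send` event.  A (diligent) schedule is given by its decisions at send events,
`dec : ℕ → Option (Fin n)` (decision for the `k`-th send event): acceptance is
forced (accept iff the destination queue is not full), at a send event the
schedule transmits one packet from the chosen non-empty queue, and it may
choose `none` only if all queues are empty.  `run` simulates the schedule,
tracking queue contents, the number of accepted packets of each value, and the
number of transmitted packets of each value.  `Feasible` expresses diligence,
and `GreedyFeasible` additionally requires that every transmitted packet has
the highest value among non-empty queues (ties broken arbitrarily).
`benefit` is the total value of transmitted packets.
-/

namespace BufferModel

inductive BEvent (n : ℕ) : Type where
  | arrive (q : Fin n) : BEvent n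
  | send : BEvent n
deriving DecidableEq

/-- `queue q` = number of packets currently in queue `q`; `acc i` = number of
packets of value index `i` accepted so far; `trans i` = number of packets of
value index `i` transmitted so far. -/
structure BState (n m : ℕ) where
  queue : Fin n → ℕ
  acc : Fin m → ℕ
  trans : Fin m → ℕ

def initState (n m : ℕ) : BState n m :=
  ⟨fun _ => 0, fun _ => 0, fun _ => 0⟩

/-- Diligent processing of an arrive event at queue `q`: accept iff there is room. -/
def arriveStep {n m : ℕ} (cap : Fin n → ℕ) (qval : Fin n → Fin m)
    (s : BState n m) (q : Fin n) : BState n m :=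
  if s.queue q < cap q then
    { queue := Function.update s.queue q (s.queue q + 1)
      acc := Function.update s.acc (qval q) (s.acc (qval q) + 1)
      trans := s.trans }
  else s

/-- Processing of a send event with decision `d`. -/
def sendStep {n m : ℕ} (qval : Fin n → Fin m) (s : BState n m)
    (d : Option (Fin n)) : BState n m :=
  match d with
  | some q =>
      if 0 < s.queue q then
        { queue := Function.update s.queue q (s.queue q - 1)
          acc := s.acc
          trans := Function.update s.trans (qval q) (s.trans (qval q) + 1) }
      else s
  | none => s

/-- Simulate the schedule with send-decisions `dec` on an event list, starting
with send-counter `k` and state `s`. -/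
def run {n m : ℕ} (cap : Fin n → ℕ) (qval : Fin n → Fin m)
    (dec : ℕ → Option (Fin n)) :
    List (BEvent n) → ℕ → BState n m → BState n m
  | [], _, s => s
  | BEvent.arrive q :: es, k, s => run cap qval dec es k (arriveStep cap qval s q)
  | BEvent.send :: es, k, s => run cap qval dec es (k + 1) (sendStep qval s (dec k))

/-- The schedule `dec` is feasible (diligent): at each send event it transmits
from a non-empty queue, and it stays idle only if all queues are empty. -/
def Feasible {n m : ℕ} (cap : Fin n → ℕ) (qval : Fin n → Fin m)
    (dec : ℕ → Option (Fin n)) :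
    List (BEvent n) → ℕ → BState n m → Prop
  | [], _, _ => True
  | BEvent.arrive q :: es, k, s => Feasible cap qval dec es k (arriveStep cap qval s q)
  | BEvent.send :: es, k, s =>
      (match dec k with
       | some q => 0 < s.queue q
       | none => ∀ q, s.queue q = 0) ∧
      Feasible cap qval dec es (k + 1) (sendStep qval s (dec k))

/-- The schedule `dec` is a GREEDY schedule: feasible, and at every send event
it transmits a packet from a non-empty queue of the highest value. -/
def GreedyFeasible {n m : ℕ} (val : Fin m → ℝ) (cap : Fin n → ℕ)
    (qval : Fin n → Fin m) (dec : ℕ → Option (Fin n)) :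
    List (BEvent n) → ℕ → BState n m → Prop
  | [], _, _ => True
  | BEvent.arrive q :: es, k, s =>
      GreedyFeasible val cap qval dec es k (arriveStep cap qval s q)
  | BEvent.send :: es, k, s =>
      (match dec k with
       | some q => 0 < s.queue q ∧
           ∀ q', 0 < s.queue q' → val (qval q') ≤ val (qval q)
       | none => ∀ q, s.queue q = 0) ∧
      GreedyFeasible val cap qval dec es (k + 1) (sendStep qval s (dec k))

/-- Benefit of a schedule: total value of the transmitted packets. -/
def benefit {n m : ℕ} (val : Fin m → ℝ) (s : BState n m) : ℝ :=
  ∑ i, val i * (s.trans i : ℝ)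

end BufferModel

namespace BufferModel

/-- One-based access (as an integer) to a family of packet counts indexed by
`Fin m`: `accI a j` is the count for the `j`-th value, `1 ≤ j ≤ m`. -/
def accI {m : ℕ} (a : Fin m → ℕ) (j : ℕ) : ℤ :=
  if h : 1 ≤ j ∧ j ≤ m then (a ⟨j - 1, by omega⟩ : ℤ) else 0

def fset (m lo hi : ℕ) : Finset (Fin m) :=
  Finset.univ.filter (fun j => lo ≤ j.val + 1 ∧ j.val + 1 ≤ hi)

lemma mem_fset {m lo hi : ℕ} {j : Fin m} :
    j ∈ fset m lo hi ↔ lo ≤ j.val + 1 ∧ j.val + 1 ≤ hi := by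
  simp [fset]

/-- The central invariant relating the GREEDY state `s` and the OPT state `t`. -/
def Inv (m i : ℕ) (s t : BState m m) : Prop :=
  ∑ j ∈ fset m i (m - 1), t.acc j ≤
    ((∑ j ∈ fset m i m, s.trans j) + ∑ j ∈ fset m (i + 1) (m - 1), s.trans j) +
      ∑ j ∈ fset m i (m - 1), min (s.queue j) (t.queue j)

lemma sum_update_one {m : ℕ} (F : Finset (Fin m)) (f : Fin m → ℕ) (a : Fin m) :
    ∑ j ∈ F, Function.update f a (f a + 1) j =
      (∑ j ∈ F, f j) + (if a ∈ F then 1 else 0) := by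
  by_cases h : a ∈ F
  · rw [Finset.sum_update_of_mem h, if_pos h, ← Finset.add_sum_erase F f h, Finset.erase_eq]
    omega
  · rw [if_neg h, Nat.add_zero]
    exact Finset.sum_congr rfl fun j hj =>
      Function.update_of_ne (by rintro rfl; exact h hj) _ _

lemma sum_ind {m : ℕ} (F : Finset (Fin m)) (a : Fin m) (c : ℕ) :
    (∑ j ∈ F, if j = a then c else 0) = if a ∈ F then c else 0 :=
  Finset.sum_ite_eq' F a fun _ => c

lemma sum_le_sum_add_ind {m : ℕ} (F : Finset (Fin m)) (u w : Fin m → ℕ) (a b : Fin m)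
    (da db : ℕ)
    (h : ∀ j ∈ F, u j ≤ w j + ((if j = a then da else 0) + (if j = b then db else 0))) :
    ∑ j ∈ F, u j ≤
      (∑ j ∈ F, w j) + ((if a ∈ F then da else 0) + (if b ∈ F then db else 0)) := by
  calc ∑ j ∈ F, u j
      ≤ ∑ j ∈ F, (w j + ((if j = a then da else 0) + (if j = b then db else 0))) :=
        Finset.sum_le_sum h
    _ = _ := by rw [Finset.sum_add_distrib, Finset.sum_add_distrib, sum_ind, sum_ind]

lemma sum_add_ind_le {m : ℕ} (F : Finset (Fin m)) (u w : Fin m → ℕ) (a : Fin m)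
    (h : ∀ j ∈ F, u j + (if j = a then 1 else 0) ≤ w j) :
    (∑ j ∈ F, u j) + (if a ∈ F then 1 else 0) ≤ ∑ j ∈ F, w j := by
  calc (∑ j ∈ F, u j) + (if a ∈ F then 1 else 0)
      = ∑ j ∈ F, (u j + if j = a then 1 else 0) := by
        rw [Finset.sum_add_distrib, sum_ind]
    _ ≤ _ := Finset.sum_le_sum h

lemma min_succ_succ' (x y : ℕ) : min x y + 1 ≤ min (x + 1) (y + 1) := by
  rw [Nat.min_def, Nat.min_def]; split_ifs <;> omega

lemma min_full {B x y : ℕ} (hx : ¬ x < B) (hy : y < B) : min x y + 1 ≤ min x (y + 1) := by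
  rw [Nat.min_def, Nat.min_def]; split_ifs <;> omega

lemma min_mono_left (x y : ℕ) : min x y ≤ min (x + 1) y := by
  rw [Nat.min_def, Nat.min_def]; split_ifs <;> omega

lemma min_mono_right (x y : ℕ) : min x y ≤ min x (y + 1) := by
  rw [Nat.min_def, Nat.min_def]; split_ifs <;> omega

lemma min_pred_left (x y : ℕ) : min x y ≤ min (x - 1) y + 1 := by
  rw [Nat.min_def, Nat.min_def]; split_ifs <;> omega

lemma min_pred_right (x y : ℕ) : min x y ≤ min x (y - 1) + 1 := by
  rw [Nat.min_def, Nat.min_def]; split_ifs <;> omega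

lemma min_pred_both (x y : ℕ) : min x y ≤ min (x - 1) (y - 1) + 1 := by
  rw [Nat.min_def, Nat.min_def]; split_ifs <;> omega

lemma inv_arrive {m : ℕ} (B i : ℕ) (s t : BState m m) (q : Fin m) (h : Inv m i s t) :
    Inv m i (arriveStep (fun _ => B) id s q) (arriveStep (fun _ => B) id t q) := by
  unfold Inv at h ⊢
  unfold arriveStep
  simp only [id_eq]
  by_cases hs : s.queue q < B <;> by_cases ht : t.queue q < B
  · rw [if_pos hs, if_pos ht]
    dsimp only
    rw [sum_update_one]
    have hmin : (∑ j ∈ fset m i (m - 1), min (s.queue j) (t.queue j)) +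
          (if q ∈ fset m i (m - 1) then 1 else 0) ≤
        ∑ j ∈ fset m i (m - 1),
          min (Function.update s.queue q (s.queue q + 1) j)
            (Function.update t.queue q (t.queue q + 1) j) := by
      apply sum_add_ind_le
      intro j hj
      by_cases hjq : j = q
      · subst hjq
        rw [if_pos rfl, Function.update_self, Function.update_self]
        exact min_succ_succ' _ _
      · rw [if_neg hjq, Function.update_of_ne hjq, Function.update_of_ne hjq, Nat.add_zero]
    omega
  · rw [if_pos hs, if_neg ht]
    dsimp only
    refine h.trans (Nat.add_le_add_left (Finset.sum_le_sum fun j hj => ?_) _)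
    by_cases hjq : j = q
    · subst hjq
      rw [Function.update_self]
      exact min_mono_left _ _
    · rw [Function.update_of_ne hjq]
  · rw [if_neg hs, if_pos ht]
    dsimp only
    rw [sum_update_one]
    have hmin : (∑ j ∈ fset m i (m - 1), min (s.queue j) (t.queue j)) +
          (if q ∈ fset m i (m - 1) then 1 else 0) ≤
        ∑ j ∈ fset m i (m - 1),
          min (s.queue j) (Function.update t.queue q (t.queue q + 1) j) := by
      apply sum_add_ind_le
      intro j hj
      by_cases hjq : j = q
      · subst hjq
        rw [if_pos rfl, Function.update_self]
        exact min_full hs ht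
      · rw [if_neg hjq, Function.update_of_ne hjq, Nat.add_zero]
    omega
  · rw [if_neg hs, if_neg ht]
    exact h

lemma inv_send {m : ℕ} (i : ℕ) (v : Fin m → ℝ) (hmono : StrictMono v) (s t : BState m m)
    (dg dd : Option (Fin m))
    (hgc : match dg with
           | some a => 0 < s.queue a ∧ ∀ q', 0 < s.queue q' → v q' ≤ v a
           | none => ∀ q, s.queue q = 0)
    (hdc : match dd with
           | some b => 0 < t.queue b
           | none => ∀ q, t.queue q = 0)
    (h : Inv m i s t) : Inv m i (sendStep id s dg) (sendStep id t dd) := by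
  have htacc : (sendStep id t dd).acc = t.acc := by
    cases dd with
    | none => rfl
    | some b => simp only [sendStep]; split <;> rfl
  cases dg with
  | none =>
    have hz : ∀ q, s.queue q = 0 := hgc
    have hs0 : sendStep (id : Fin m → Fin m) s none = s := rfl
    unfold Inv at h ⊢
    rw [htacc, hs0]
    have e2 : ∑ j ∈ fset m i (m - 1), min (s.queue j) ((sendStep id t dd).queue j) = 0 :=
      Finset.sum_eq_zero fun j _ => by simp [hz j]
    have e1 : ∑ j ∈ fset m i (m - 1), min (s.queue j) (t.queue j) = 0 :=
      Finset.sum_eq_zero fun j _ => by simp [hz j]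
    omega
  | some a =>
    obtain ⟨ha, htop⟩ := hgc
    have hstep : sendStep (id : Fin m → Fin m) s (some a) =
        { queue := Function.update s.queue a (s.queue a - 1), acc := s.acc,
          trans := Function.update s.trans a (s.trans a + 1) } := by
      simp only [sendStep, id_eq, if_pos ha]
    unfold Inv at h ⊢
    rw [htacc, hstep]
    dsimp only
    rw [sum_update_one (fset m i m) s.trans a, sum_update_one (fset m (i + 1) (m - 1)) s.trans a]
    have haG : a ∈ fset m i (m - 1) → a ∈ fset m i m := by
      simp only [mem_fset]; omega
    cases dd with
    | none =>
      have ht0 : sendStep (id : Fin m → Fin m) t none = t := rfl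
      rw [ht0]
      have hmin : ∑ j ∈ fset m i (m - 1), min (s.queue j) (t.queue j) ≤
          (∑ j ∈ fset m i (m - 1),
            min (Function.update s.queue a (s.queue a - 1) j) (t.queue j)) +
          ((if a ∈ fset m i (m - 1) then 1 else 0) +
            (if a ∈ fset m i (m - 1) then 0 else 0)) := by
        apply sum_le_sum_add_ind
        intro j hj
        by_cases hja : j = a
        · subst hja
          rw [if_pos rfl, if_pos rfl, Function.update_self]
          have := min_pred_left (s.queue j) (t.queue j)
          omega
        · rw [if_neg hja, if_neg hja, Function.update_of_ne hja]
          omega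
      have harith : (if a ∈ fset m i (m - 1) then 1 else 0) +
            (if a ∈ fset m i (m - 1) then 0 else 0) ≤
          (if a ∈ fset m i m then 1 else 0) +
            (if a ∈ fset m (i + 1) (m - 1) then 1 else 0) := by
        by_cases hx : a ∈ fset m i (m - 1)
        · simp [hx, haG hx]
        · simp [hx]
      omega
    | some b =>
      have hb : 0 < t.queue b := hdc
      have htstep : sendStep (id : Fin m → Fin m) t (some b) =
          { queue := Function.update t.queue b (t.queue b - 1), acc := t.acc,
            trans := Function.update t.trans b (t.trans b + 1) } := by
        simp only [sendStep, id_eq, if_pos hb]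
      rw [htstep]
      dsimp only
      have hIa := a.isLt
      have hIb := b.isLt
      rcases Nat.lt_trichotomy a.val b.val with hab | hab | hab
      · -- a < b : greedy's queue b must be empty
        have hne : a ≠ b := fun e => by rw [e] at hab; omega
        have hsb : s.queue b = 0 := by
          by_contra hsb0
          have hq := htop b (Nat.pos_of_ne_zero hsb0)
          exact absurd hq (not_le.mpr (hmono (Fin.lt_def.mpr hab)))
        have hmin : ∑ j ∈ fset m i (m - 1), min (s.queue j) (t.queue j) ≤
            (∑ j ∈ fset m i (m - 1),
              min (Function.update s.queue a (s.queue a - 1) j)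
                (Function.update t.queue b (t.queue b - 1) j)) +
            ((if a ∈ fset m i (m - 1) then 1 else 0) +
              (if b ∈ fset m i (m - 1) then 0 else 0)) := by
          apply sum_le_sum_add_ind
          intro j hj
          by_cases hja : j = a
          · subst hja
            rw [if_pos rfl, if_neg hne, Function.update_self,
              Function.update_of_ne hne]
            have := min_pred_left (s.queue j) (t.queue j)
            omega
          · by_cases hjb : j = b
            · subst hjb
              rw [if_neg hja, if_pos rfl, Function.update_of_ne hja,
                Function.update_self, hsb]
              simp
            · rw [if_neg hja, if_neg hjb, Function.update_of_ne hja,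
                Function.update_of_ne hjb]
              omega
        have harith : (if a ∈ fset m i (m - 1) then 1 else 0) +
              (if b ∈ fset m i (m - 1) then 0 else 0) ≤
            (if a ∈ fset m i m then 1 else 0) +
              (if a ∈ fset m (i + 1) (m - 1) then 1 else 0) := by
          by_cases hx : a ∈ fset m i (m - 1)
          · simp only [if_pos hx, if_pos (haG hx)]
            split_ifs <;> omega
          · simp only [if_neg hx]
            split_ifs <;> omega
        omega
      · -- a = b
        have heq : a = b := Fin.ext hab
        subst heq
        have hmin : ∑ j ∈ fset m i (m - 1), min (s.queue j) (t.queue j) ≤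
            (∑ j ∈ fset m i (m - 1),
              min (Function.update s.queue a (s.queue a - 1) j)
                (Function.update t.queue a (t.queue a - 1) j)) +
            ((if a ∈ fset m i (m - 1) then 1 else 0) +
              (if a ∈ fset m i (m - 1) then 0 else 0)) := by
          apply sum_le_sum_add_ind
          intro j hj
          by_cases hja : j = a
          · subst hja
            rw [if_pos rfl, if_pos rfl, Function.update_self, Function.update_self]
            have := min_pred_both (s.queue j) (t.queue j)
            omega
          · rw [if_neg hja, if_neg hja, Function.update_of_ne hja,
              Function.update_of_ne hja]
            omega
        have harith : (if a ∈ fset m i (m - 1) then 1 else 0) +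
              (if a ∈ fset m i (m - 1) then 0 else 0) ≤
            (if a ∈ fset m i m then 1 else 0) +
              (if a ∈ fset m (i + 1) (m - 1) then 1 else 0) := by
          by_cases hx : a ∈ fset m i (m - 1)
          · simp [hx, haG hx]
          · simp [hx]
        omega
      · -- b < a
        have hne : a ≠ b := fun e => by rw [e] at hab; omega
        have hmin : ∑ j ∈ fset m i (m - 1), min (s.queue j) (t.queue j) ≤
            (∑ j ∈ fset m i (m - 1),
              min (Function.update s.queue a (s.queue a - 1) j)
                (Function.update t.queue b (t.queue b - 1) j)) +
            ((if a ∈ fset m i (m - 1) then 1 else 0) +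
              (if b ∈ fset m i (m - 1) then 1 else 0)) := by
          apply sum_le_sum_add_ind
          intro j hj
          by_cases hja : j = a
          · subst hja
            rw [if_pos rfl, if_neg hne, Function.update_self,
              Function.update_of_ne hne]
            have := min_pred_left (s.queue j) (t.queue j)
            omega
          · by_cases hjb : j = b
            · subst hjb
              rw [if_neg hja, if_pos rfl, Function.update_of_ne hja,
                Function.update_self]
              have := min_pred_right (s.queue j) (t.queue j)
              omega
            · rw [if_neg hja, if_neg hjb, Function.update_of_ne hja,
                Function.update_of_ne hjb]
              omega
        have harith : (if a ∈ fset m i (m - 1) then 1 else 0) +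
              (if b ∈ fset m i (m - 1) then 1 else 0) ≤
            (if a ∈ fset m i m then 1 else 0) +
              (if a ∈ fset m (i + 1) (m - 1) then 1 else 0) := by
          simp only [mem_fset]
          split_ifs <;> omega
        omega

lemma inv_run {m : ℕ} (B i : ℕ) (v : Fin m → ℝ) (hmono : StrictMono v)
    (g d : ℕ → Option (Fin m)) :
    ∀ (σ : List (BEvent m)) (k : ℕ) (s t : BState m m),
      GreedyFeasible v (fun _ => B) id g σ k s →
      Feasible (fun _ => B) id d σ k t →
      Inv m i s t →
      Inv m i (run (fun _ => B) id g σ k s) (run (fun _ => B) id d σ k t) := by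
  intro σ
  induction σ with
  | nil => intro k s t _ _ h; exact h
  | cons e es ih =>
    intro k s t hgf hdf h
    cases e with
    | arrive q =>
      exact ih k _ _ hgf hdf (inv_arrive B i s t q h)
    | send =>
      exact ih (k + 1) _ _ hgf.2 hdf.2
        (inv_send i v hmono s t (g k) (d k) hgf.1 hdf.1 h)

/-- Bookkeeping invariant: accepted = transmitted + in queue. -/
def Consist {m : ℕ} (s : BState m m) : Prop := ∀ j, s.acc j = s.trans j + s.queue j

lemma consist_arrive {m : ℕ} (B : ℕ) (s : BState m m) (q : Fin m) (h : Consist s) :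
    Consist (arriveStep (fun _ => B) id s q) := by
  intro j
  unfold arriveStep
  dsimp only [id_eq]
  split
  · by_cases hjq : j = q
    · subst hjq
      simp only [Function.update_self]
      have := h j; omega
    · simp only [Function.update_of_ne hjq]
      exact h j
  · exact h j

lemma consist_send {m : ℕ} (s : BState m m) (dd : Option (Fin m)) (h : Consist s) :
    Consist (sendStep id s dd) := by
  intro j
  cases dd with
  | none => exact h j
  | some a =>
    simp only [sendStep, id_eq]
    split
    · rename_i hpos
      by_cases hja : j = a
      · subst hja
        simp only [Function.update_self]
        have := h j; omega
      · simp only [Function.update_of_ne hja]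
        exact h j
    · exact h j

lemma consist_run {m : ℕ} (B : ℕ) (dec : ℕ → Option (Fin m)) :
    ∀ (σ : List (BEvent m)) (k : ℕ) (s : BState m m),
      Consist s → Consist (run (fun _ => B) id dec σ k s) := by
  intro σ
  induction σ with
  | nil => intro k s h; exact h
  | cons e es ih =>
    intro k s h
    cases e with
    | arrive q => exact ih k _ (consist_arrive B s q h)
    | send => exact ih (k + 1) _ (consist_send s (dec k) h)

lemma sum_accI {m : ℕ} (a : Fin m → ℕ) (lo hi : ℕ) (hlo : 1 ≤ lo) (hhi : hi ≤ m) :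
    ∑ j ∈ Finset.Icc lo hi, accI a j = ((∑ j ∈ fset m lo hi, a j : ℕ) : ℤ) := by
  have himg : (fset m lo hi).image (fun j => j.val + 1) = Finset.Icc lo hi := by
    ext x
    simp only [Finset.mem_image, mem_fset, Finset.mem_Icc]
    constructor
    · rintro ⟨j, ⟨h1, h2⟩, rfl⟩; exact ⟨h1, h2⟩
    · rintro ⟨h1, h2⟩
      refine ⟨⟨x - 1, by omega⟩, ⟨?_, ?_⟩, ?_⟩ <;> dsimp only <;> omega
  rw [← himg, Finset.sum_image (fun x _ y _ hxy => Fin.ext (by omega))]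
  push_cast
  refine Finset.sum_congr rfl fun j hj => ?_
  unfold accI
  rw [dif_pos ⟨Nat.le_add_left 1 j.val, j.isLt⟩]
  simp

lemma fset_split {m : ℕ} (lo : ℕ) (hm : 2 ≤ m) (hlo : lo ≤ m) :
    fset m lo m = insert (⟨m - 1, by omega⟩ : Fin m) (fset m lo (m - 1)) := by
  ext j
  simp only [Finset.mem_insert, mem_fset, Fin.ext_iff]
  have := j.isLt
  omega

/-- In the restricted class-segregated buffer model (one
queue per value `v_1 < ... < v_m`, all of capacity `B`), for every input
sequence `σ`, every feasible diligent schedule `d` (playing the role of OPT),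
every GREEDY schedule `g`, and every `1 ≤ i ≤ m-1`:
`∑_{j=i}^{m-1} (A*_j − A_j) ≤ ∑_{j=i+1}^{m} A_j`. -/
theorem central_lemma
    (m B : ℕ) (v : Fin m → ℝ) (hpos : ∀ i, 0 < v i) (hmono : StrictMono v)
    (σ : List (BEvent m)) (g d : ℕ → Option (Fin m))
    (hg : GreedyFeasible v (fun _ => B) id g σ 0 (initState m m))
    (hd : Feasible (fun _ => B) id d σ 0 (initState m m))
    (i : ℕ) (hi : 1 ≤ i) (him : i ≤ m - 1) :
    ∑ j ∈ Finset.Icc i (m - 1),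
        (accI (run (fun _ => B) id d σ 0 (initState m m)).acc j -
          accI (run (fun _ => B) id g σ 0 (initState m m)).acc j) ≤
      ∑ j ∈ Finset.Icc (i + 1) m,
        accI (run (fun _ => B) id g σ 0 (initState m m)).acc j := by
  have hm : 2 ≤ m := by omega
  set sg := run (fun _ => B) id g σ 0 (initState m m) with hsgdef
  set sd := run (fun _ => B) id d σ 0 (initState m m) with hsddef
  have hInv : Inv m i sg sd :=
    inv_run B i v hmono g d σ 0 _ _ hg hd (by simp [Inv, initState])
  have hcons : Consist sg := consist_run B g σ 0 _ (fun j => rfl)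
  have key : (∑ j ∈ fset m i (m - 1), sd.acc j) ≤
      (∑ j ∈ fset m i (m - 1), sg.acc j) + ∑ j ∈ fset m (i + 1) m, sg.acc j := by
    have h1 : (∑ j ∈ fset m i (m - 1), min (sg.queue j) (sd.queue j)) ≤
        ∑ j ∈ fset m i (m - 1), sg.queue j :=
      Finset.sum_le_sum fun j _ => Nat.min_le_left _ _
    have h2 : (∑ j ∈ fset m i (m - 1), sg.queue j) ≤ ∑ j ∈ fset m i m, sg.queue j :=
      Finset.sum_le_sum_of_subset (fun j hj => by
        rw [mem_fset] at hj ⊢; omega)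
    have h3 : (∑ j ∈ fset m i m, sg.trans j) + (∑ j ∈ fset m i m, sg.queue j) =
        ∑ j ∈ fset m i m, sg.acc j := by
      rw [← Finset.sum_add_distrib]
      exact Finset.sum_congr rfl fun j _ => (hcons j).symm
    have h4 : (∑ j ∈ fset m (i + 1) (m - 1), sg.trans j) ≤
        ∑ j ∈ fset m (i + 1) (m - 1), sg.acc j :=
      Finset.sum_le_sum fun j _ => by rw [hcons j]; omega
    have h5 : ∑ j ∈ fset m i m, sg.acc j =
        sg.acc ⟨m - 1, by omega⟩ + ∑ j ∈ fset m i (m - 1), sg.acc j := by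
      rw [fset_split i hm (by omega), Finset.sum_insert (by
        rw [mem_fset]; dsimp only; omega)]
    have h6 : ∑ j ∈ fset m (i + 1) m, sg.acc j =
        sg.acc ⟨m - 1, by omega⟩ + ∑ j ∈ fset m (i + 1) (m - 1), sg.acc j := by
      rw [fset_split (i + 1) hm (by omega), Finset.sum_insert (by
        rw [mem_fset]; dsimp only; omega)]
    unfold Inv at hInv
    omega
  rw [Finset.sum_sub_distrib, sum_accI sd.acc i (m - 1) hi (by omega),
    sum_accI sg.acc i (m - 1) hi (by omega), sum_accI sg.acc (i + 1) m (by omega) le_rfl]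
  omega


end BufferModel
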